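/- arXiv:2008.03707 — 11 statements merged into one kernel-verified Lean document; each statement's English description precedes it below -/
import Mathlib

section
/- Let P and P' be row-stochastic matrices on Fin S with stationary distributions π and π' respectively, let r, r' : Fin S → ℝ be reward vectors, let β be a real number, and let J_μ, J_{μ,σ} (resp. J'_μ, J'_{μ,σ}) denote the mean and mean-variance combined metric under (P, π, r) (resp. (P', π', r')). If g is a performance potential for (P, π, r, β), then J'_{μ,σ} - J_{μ,σ} = ∑_i π' i * ( ∑_j (P' i j - P i j) * g j + r' i - β*(r' i - J_μ)^2 - r i + β*(r i - J_μ)^2 ) + β*(J'_μ - J_μ)^2. -/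
/-- Mean-variance combined performance difference formula (Lemma 1). -/
theorem mean_variance_difference_formula
    (S : ℕ) (hS : 1 ≤ S)
    (P P' : Matrix (Fin S) (Fin S) ℝ)
    (hP0 : ∀ i j, 0 ≤ P i j) (hP1 : ∀ i, ∑ j, P i j = 1)
    (hP'0 : ∀ i j, 0 ≤ P' i j) (hP'1 : ∀ i, ∑ j, P' i j = 1)
    (π π' : Fin S → ℝ)
    (hπ0 : ∀ i, 0 ≤ π i) (hπ1 : ∑ i, π i = 1)
    (hπstat : ∀ j, ∑ i, π i * P i j = π j)
    (hπ'0 : ∀ i, 0 ≤ π' i) (hπ'1 : ∑ i, π' i = 1)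
    (hπ'stat : ∀ j, ∑ i, π' i * P' i j = π' j)
    (r r' : Fin S → ℝ) (β : ℝ)
    (Jmu Jmu' Jms Jms' : ℝ)
    (hJmu : Jmu = ∑ i, π i * r i)
    (hJmu' : Jmu' = ∑ i, π' i * r' i)
    (hJms : Jms = Jmu - β * ∑ i, π i * (r i - Jmu) ^ 2)
    (hJms' : Jms' = Jmu' - β * ∑ i, π' i * (r' i - Jmu') ^ 2)
    (g : Fin S → ℝ)
    (hg : ∀ i, g i = r i - β * (r i - Jmu) ^ 2 - Jms + ∑ j, P i j * g j) :
    Jms' - Jms =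
      (∑ i, π' i * ((∑ j, (P' i j - P i j) * g j)
        + r' i - β * (r' i - Jmu) ^ 2 - r i + β * (r i - Jmu) ^ 2))
      + β * (Jmu' - Jmu) ^ 2 := by
  have hsum : ∀ c : ℝ, ∑ i, π' i * c = c := by
    intro c; rw [← Finset.sum_mul, hπ'1, one_mul]
  have hPg : ∀ i, ∑ j, P i j * g j = g i - r i + β * (r i - Jmu) ^ 2 + Jms := by
    intro i; have := hg i; linarith
  -- π'-sum of P' g equals π'-sum of g (stationarity)
  have h1 : (∑ i, π' i * ∑ j, P' i j * g j) = ∑ i, π' i * g i := by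
    have h : (∑ i, π' i * ∑ j, P' i j * g j) = ∑ j, (∑ i, π' i * P' i j) * g j := by
      simp_rw [Finset.mul_sum, Finset.sum_mul, mul_assoc]
      exact Finset.sum_comm
    rw [h]; simp_rw [hπ'stat]
  have key1 : (∑ i, π' i * ∑ j, (P' i j - P i j) * g j)
      = (∑ i, π' i * r i) - β * (∑ i, π' i * (r i - Jmu) ^ 2) - Jms := by
    have e1 : (∑ i, π' i * ∑ j, (P' i j - P i j) * g j)
        = (∑ i, π' i * ∑ j, P' i j * g j) - ∑ i, π' i * ∑ j, P i j * g j := by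
      rw [← Finset.sum_sub_distrib]
      refine Finset.sum_congr rfl fun i _ => ?_
      rw [← mul_sub, ← Finset.sum_sub_distrib]
      congr 1; refine Finset.sum_congr rfl fun j _ => ?_; ring
    rw [e1, h1]
    have e2 : (∑ i, π' i * ∑ j, P i j * g j)
        = (∑ i, π' i * g i) - (∑ i, π' i * r i)
          + β * (∑ i, π' i * (r i - Jmu) ^ 2) + Jms := by
      have : (∑ i, π' i * ∑ j, P i j * g j)
          = ∑ i, (π' i * g i - π' i * r i + β * (π' i * (r i - Jmu) ^ 2) + π' i * Jms) := by
        refine Finset.sum_congr rfl fun i _ => ?_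
        rw [hPg i]; ring
      rw [this]
      simp only [Finset.sum_add_distrib, Finset.sum_sub_distrib, ← Finset.mul_sum, hsum]
    rw [e2]; ring
  have cross : ∑ i, π' i * (r' i - Jmu') = 0 := by
    have h : ∑ i, π' i * (r' i - Jmu') = (∑ i, π' i * r' i) - ∑ i, π' i * Jmu' := by
      rw [← Finset.sum_sub_distrib]
      exact Finset.sum_congr rfl fun i _ => by ring
    rw [h, hsum, ← hJmu', sub_self]
  have key2 : ∑ i, π' i * (r' i - Jmu) ^ 2
      = (∑ i, π' i * (r' i - Jmu') ^ 2) + (Jmu' - Jmu) ^ 2 := by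
    have h : ∑ i, π' i * (r' i - Jmu) ^ 2
        = ∑ i, (π' i * (r' i - Jmu') ^ 2
            + 2 * (Jmu' - Jmu) * (π' i * (r' i - Jmu')) + π' i * (Jmu' - Jmu) ^ 2) := by
      exact Finset.sum_congr rfl fun i _ => by ring
    rw [h]
    simp only [Finset.sum_add_distrib, ← Finset.mul_sum, hsum, cross]
    ring
  -- split the big sum in the goal
  have split : (∑ i, π' i * ((∑ j, (P' i j - P i j) * g j)
        + r' i - β * (r' i - Jmu) ^ 2 - r i + β * (r i - Jmu) ^ 2))
      = (∑ i, π' i * ∑ j, (P' i j - P i j) * g j)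
        + (∑ i, π' i * r' i) - β * (∑ i, π' i * (r' i - Jmu) ^ 2)
        - (∑ i, π' i * r i) + β * (∑ i, π' i * (r i - Jmu) ^ 2) := by
    have h : (∑ i, π' i * ((∑ j, (P' i j - P i j) * g j)
          + r' i - β * (r' i - Jmu) ^ 2 - r i + β * (r i - Jmu) ^ 2))
        = ∑ i, ((π' i * ∑ j, (P' i j - P i j) * g j)
            + π' i * r' i - β * (π' i * (r' i - Jmu) ^ 2)
            - π' i * r i + β * (π' i * (r i - Jmu) ^ 2)) := by
      exact Finset.sum_congr rfl fun i _ => by ring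
    rw [h]
    simp only [Finset.sum_add_distrib, Finset.sum_sub_distrib, ← Finset.mul_sum]
  rw [split, key1]
  linear_combination hJms' + hJmu' + β * key2
end

section
/- Let P and P' be row-stochastic matrices on Fin S with stationary distributions π and π' respectively, let r, r' : Fin S → ℝ, let β ≥ 0, and let g be a performance potential for (P, π, r, β) with mean J_μ. If for every state i it holds that ∑_j P' i j * g j + r' i - β*(r' i - J_μ)^2 ≥ ∑_j P i j * g j + r i - β*(r i - J_μ)^2, then J'_{μ,σ} ≥ J_{μ,σ}, where J_{μ,σ} and J'_{μ,σ} are the mean-variance combined metrics under (P, π, r) and (P', π', r'). If moreover π' i > 0 for every i and the inequality is strict for at least one state, then J'_{μ,σ} > J_{μ,σ}. -/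
/-- Policy improvement (Theorem 1): pointwise improvement of the
mean-variance combined "Q-values" implies improvement of the combined metric,
strictly so if the stationary distribution is positive and the inequality is
strict at some state. -/
theorem mean_variance_policy_improvement
    (S : ℕ) (hS : 1 ≤ S)
    (P P' : Matrix (Fin S) (Fin S) ℝ)
    (hP0 : ∀ i j, 0 ≤ P i j) (hP1 : ∀ i, ∑ j, P i j = 1)
    (hP'0 : ∀ i j, 0 ≤ P' i j) (hP'1 : ∀ i, ∑ j, P' i j = 1)
    (π π' : Fin S → ℝ)
    (hπ0 : ∀ i, 0 ≤ π i) (hπ1 : ∑ i, π i = 1)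
    (hπstat : ∀ j, ∑ i, π i * P i j = π j)
    (hπ'0 : ∀ i, 0 ≤ π' i) (hπ'1 : ∑ i, π' i = 1)
    (hπ'stat : ∀ j, ∑ i, π' i * P' i j = π' j)
    (r r' : Fin S → ℝ) (β : ℝ) (hβ : 0 ≤ β)
    (Jmu Jmu' Jms Jms' : ℝ)
    (hJmu : Jmu = ∑ i, π i * r i)
    (hJmu' : Jmu' = ∑ i, π' i * r' i)
    (hJms : Jms = Jmu - β * ∑ i, π i * (r i - Jmu) ^ 2)
    (hJms' : Jms' = Jmu' - β * ∑ i, π' i * (r' i - Jmu') ^ 2)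
    (g : Fin S → ℝ)
    (hg : ∀ i, g i = r i - β * (r i - Jmu) ^ 2 - Jms + ∑ j, P i j * g j)
    (himp : ∀ i, (∑ j, P i j * g j) + r i - β * (r i - Jmu) ^ 2
      ≤ (∑ j, P' i j * g j) + r' i - β * (r' i - Jmu) ^ 2) :
    Jms ≤ Jms' ∧
      ((∀ i, 0 < π' i) →
        (∃ i, (∑ j, P i j * g j) + r i - β * (r i - Jmu) ^ 2
          < (∑ j, P' i j * g j) + r' i - β * (r' i - Jmu) ^ 2) →
        Jms < Jms') := by
  have h1 : ∑ i, π' i * ∑ j, P' i j * g j = ∑ i, π' i * g i := by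
    calc ∑ i, π' i * ∑ j, P' i j * g j
        = ∑ i, ∑ j, π' i * P' i j * g j := by
          simp_rw [Finset.mul_sum, mul_assoc]
      _ = ∑ j, ∑ i, π' i * P' i j * g j := Finset.sum_comm
      _ = ∑ j, (∑ i, π' i * P' i j) * g j := by simp_rw [Finset.sum_mul]
      _ = ∑ i, π' i * g i := by simp_rw [hπ'stat]
  have h2 : ∀ i, (∑ j, P i j * g j) + r i - β * (r i - Jmu) ^ 2 = g i + Jms := by
    intro i; rw [hg i]; ring
  have e : ∀ c : ℝ, ∑ i, π' i * (r' i - c) ^ 2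
      = ∑ i, π' i * (r' i) ^ 2 - 2 * c * Jmu' + c ^ 2 := by
    intro c
    calc ∑ i, π' i * (r' i - c) ^ 2
        = ∑ i, (π' i * (r' i) ^ 2 - 2 * c * (π' i * r' i) + c ^ 2 * π' i) :=
          Finset.sum_congr rfl fun i _ => by ring
      _ = ∑ i, (π' i * (r' i) ^ 2 - 2 * c * (π' i * r' i)) + c ^ 2 * ∑ i, π' i := by
          rw [Finset.sum_add_distrib, Finset.mul_sum]
      _ = (∑ i, π' i * (r' i) ^ 2) - 2 * c * ∑ i, π' i * r' i + c ^ 2 * ∑ i, π' i := by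
          rw [Finset.sum_sub_distrib, ← Finset.mul_sum]
      _ = _ := by rw [hπ'1, ← hJmu']; ring
  set V' := ∑ i, π' i * (r' i - Jmu') ^ 2 with hV'
  have hvar : ∑ i, π' i * (r' i - Jmu) ^ 2 = V' + (Jmu' - Jmu) ^ 2 := by
    rw [e Jmu, hV', e Jmu']; ring
  have hs1 : ∑ i, π' i * ((∑ j, P' i j * g j) + r' i - β * (r' i - Jmu) ^ 2)
      = (∑ i, π' i * g i) + Jmu' - β * V' - β * (Jmu' - Jmu) ^ 2 := by
    calc ∑ i, π' i * ((∑ j, P' i j * g j) + r' i - β * (r' i - Jmu) ^ 2)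
        = ∑ i, (π' i * ∑ j, P' i j * g j + (π' i * r' i - β * (π' i * (r' i - Jmu) ^ 2))) :=
          Finset.sum_congr rfl fun i _ => by ring
      _ = (∑ i, π' i * ∑ j, P' i j * g j)
          + ((∑ i, π' i * r' i) - β * ∑ i, π' i * (r' i - Jmu) ^ 2) := by
          rw [Finset.sum_add_distrib, Finset.sum_sub_distrib, Finset.mul_sum]
      _ = _ := by rw [h1, hvar, ← hJmu']; ring
  have hs2 : ∑ i, π' i * ((∑ j, P i j * g j) + r i - β * (r i - Jmu) ^ 2)
      = (∑ i, π' i * g i) + Jms := by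
    calc ∑ i, π' i * ((∑ j, P i j * g j) + r i - β * (r i - Jmu) ^ 2)
        = ∑ i, (π' i * g i + Jms * π' i) :=
          Finset.sum_congr rfl fun i _ => by rw [h2 i]; ring
      _ = (∑ i, π' i * g i) + Jms * ∑ i, π' i := by
          rw [Finset.sum_add_distrib, Finset.mul_sum]
      _ = _ := by rw [hπ'1]; ring
  have hb : 0 ≤ β * (Jmu' - Jmu) ^ 2 := mul_nonneg hβ (sq_nonneg _)
  constructor
  · have hle : ∑ i, π' i * ((∑ j, P i j * g j) + r i - β * (r i - Jmu) ^ 2)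
        ≤ ∑ i, π' i * ((∑ j, P' i j * g j) + r' i - β * (r' i - Jmu) ^ 2) :=
      Finset.sum_le_sum fun i _ => mul_le_mul_of_nonneg_left (himp i) (hπ'0 i)
    rw [hs1, hs2] at hle
    rw [hJms']
    linarith
  · intro hpos ⟨i0, hi0⟩
    have hlt : ∑ i, π' i * ((∑ j, P i j * g j) + r i - β * (r i - Jmu) ^ 2)
        < ∑ i, π' i * ((∑ j, P' i j * g j) + r' i - β * (r' i - Jmu) ^ 2) := by
      refine Finset.sum_lt_sum (fun i _ => mul_le_mul_of_nonneg_left (himp i) (hπ'0 i))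
        ⟨i0, Finset.mem_univ i0, ?_⟩
      exact mul_lt_mul_of_pos_left hi0 (hpos i0)
    rw [hs1, hs2] at hlt
    rw [hJms']
    linarith
end

section
/- In the finite MDP setup, let β > 0 and suppose every deterministic policy d has a strictly positive stationary distribution Π d. If a deterministic policy d* maximizes the mean-variance combined metric, i.e. J^{d*}_{μ,σ} ≥ J^{d'}_{μ,σ} for every deterministic policy d', and g is a performance potential for d*, then for every state i and every action a: ∑_j p a i j * g j + r i a - β*(r i a - J^{d*}_μ)^2 ≤ ∑_j P^{d*} i j * g j + r i (d* i) - β*(r i (d* i) - J^{d*}_μ)^2. -/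
/-- Necessary optimality condition (Theorem 2): an optimal deterministic
policy maximizes the mean-variance combined "Q-value" at every state. -/
theorem mean_variance_necessary_condition
    (S : ℕ) (hS : 1 ≤ S) (A : Type) [Fintype A] [Nonempty A]
    (p : A → Matrix (Fin S) (Fin S) ℝ)
    (hp0 : ∀ a i j, 0 ≤ p a i j) (hp1 : ∀ a i, ∑ j, p a i j = 1)
    (r : Fin S → A → ℝ) (β : ℝ) (hβ : 0 < β)
    (Pi : (Fin S → A) → Fin S → ℝ)
    (hPipos : ∀ d i, 0 < Pi d i)
    (hPi1 : ∀ d, ∑ i, Pi d i = 1)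
    (hPistat : ∀ (d : Fin S → A) (j : Fin S), ∑ i, Pi d i * p (d i) i j = Pi d j)
    (Jmu Jms : (Fin S → A) → ℝ)
    (hJmu : ∀ d, Jmu d = ∑ i, Pi d i * r i (d i))
    (hJms : ∀ d, Jms d = Jmu d - β * ∑ i, Pi d i * (r i (d i) - Jmu d) ^ 2)
    (dstar : Fin S → A)
    (hopt : ∀ d' : Fin S → A, Jms d' ≤ Jms dstar)
    (g : Fin S → ℝ)
    (hg : ∀ i, g i = r i (dstar i) - β * (r i (dstar i) - Jmu dstar) ^ 2
      - Jms dstar + ∑ j, p (dstar i) i j * g j) :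
    ∀ (i : Fin S) (a : A),
      (∑ j, p a i j * g j) + r i a - β * (r i a - Jmu dstar) ^ 2
        ≤ (∑ j, p (dstar i) i j * g j) + r i (dstar i)
          - β * (r i (dstar i) - Jmu dstar) ^ 2 := by
  intro i0 a
  classical
  set d' : Fin S → A := Function.update dstar i0 a with hd'def
  have hd'i0 : d' i0 = a := Function.update_self i0 a dstar
  have hd'ne : ∀ i, i ≠ i0 → d' i = dstar i := fun i h => Function.update_of_ne h a dstar
  set c : ℝ := Jmu dstar with hc
  set f : (Fin S → A) → Fin S → ℝ := fun d i => r i (d i) - β * (r i (d i) - c) ^ 2 with hf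
  set Qd : (Fin S → A) → Fin S → ℝ := fun d i => (∑ j, p (d i) i j * g j) + f d i with hQ
  have hgQ : ∀ i, Qd dstar i = g i + Jms dstar := by
    intro i
    rw [hg i]
    simp only [hQ, hf]
    ring
  -- stationarity: ∑ᵢ Πd' i * (P^{d'} g)ᵢ = ∑ⱼ Πd' j * g j
  have h1 : ∑ i, Pi d' i * (∑ j, p (d' i) i j * g j) = ∑ j, Pi d' j * g j := by
    simp_rw [Finset.mul_sum]
    rw [Finset.sum_comm]
    refine Finset.sum_congr rfl fun j _ => ?_
    simp_rw [show ∀ i, Pi d' i * (p (d' i) i j * g j) = (Pi d' i * p (d' i) i j) * g j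
      from fun i => by ring]
    rw [← Finset.sum_mul, hPistat d' j]
  -- difference formula
  have key : ∑ i, Pi d' i * (Qd d' i - Qd dstar i)
      = (∑ i, Pi d' i * f d' i) - Jms dstar := by
    calc ∑ i, Pi d' i * (Qd d' i - Qd dstar i)
        = ∑ i, (Pi d' i * (∑ j, p (d' i) i j * g j) + Pi d' i * f d' i
            - Pi d' i * g i - Pi d' i * Jms dstar) := by
          refine Finset.sum_congr rfl fun i _ => ?_
          rw [hgQ i]
          simp only [hQ]
          ring
      _ = (∑ i, Pi d' i * (∑ j, p (d' i) i j * g j)) + (∑ i, Pi d' i * f d' i)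
            - (∑ i, Pi d' i * g i) - (∑ i, Pi d' i * Jms dstar) := by
          rw [Finset.sum_sub_distrib, Finset.sum_sub_distrib, Finset.sum_add_distrib]
      _ = (∑ i, Pi d' i * f d' i) - Jms dstar := by
          rw [h1, ← Finset.sum_mul, hPi1 d']
          ring
  -- variance decomposition
  have hvar : ∑ i, Pi d' i * (r i (d' i) - c) ^ 2
      = (∑ i, Pi d' i * (r i (d' i) - Jmu d') ^ 2) + (Jmu d' - c) ^ 2 := by
    have hm : ∑ i, Pi d' i * r i (d' i) = Jmu d' := (hJmu d').symm
    calc ∑ i, Pi d' i * (r i (d' i) - c) ^ 2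
        = ∑ i, (Pi d' i * (r i (d' i) - Jmu d') ^ 2
            + 2 * (Jmu d' - c) * (Pi d' i * r i (d' i))
            + ((c - Jmu d') * (c + Jmu d')) * Pi d' i) := by
          refine Finset.sum_congr rfl fun i _ => ?_
          ring
      _ = (∑ i, Pi d' i * (r i (d' i) - Jmu d') ^ 2)
            + 2 * (Jmu d' - c) * (∑ i, Pi d' i * r i (d' i))
            + ((c - Jmu d') * (c + Jmu d')) * (∑ i, Pi d' i) := by
          rw [Finset.sum_add_distrib, Finset.sum_add_distrib, ← Finset.mul_sum,
            ← Finset.mul_sum]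
      _ = _ := by rw [hm, hPi1 d']; ring
  -- the "pseudo gain" of d' is at most Jms dstar
  have heta : ∑ i, Pi d' i * f d' i ≤ Jms dstar := by
    have h0 : ∑ i, Pi d' i * f d' i = Jms d' - β * (Jmu d' - c) ^ 2 := by
      have hsplit : ∑ i, Pi d' i * f d' i
          = (∑ i, Pi d' i * r i (d' i)) - β * ∑ i, Pi d' i * (r i (d' i) - c) ^ 2 := by
        rw [Finset.mul_sum, ← Finset.sum_sub_distrib]
        refine Finset.sum_congr rfl fun i _ => ?_
        simp only [hf]
        ring
      rw [hsplit, hvar, hJms d', hJmu d']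
      ring
    have hsq : 0 ≤ β * (Jmu d' - c) ^ 2 := by positivity
    have := hopt d'
    linarith
  -- the sum over states collapses to the single state i0
  have hcollapse : ∑ i, Pi d' i * (Qd d' i - Qd dstar i)
      = Pi d' i0 * (Qd d' i0 - Qd dstar i0) := by
    refine Finset.sum_eq_single i0 (fun i _ hne => ?_) (fun h => absurd (Finset.mem_univ i0) h)
    have : d' i = dstar i := hd'ne i hne
    simp only [hQ, hf, this, sub_self, mul_zero]
  have hfinal : Pi d' i0 * (Qd d' i0 - Qd dstar i0) ≤ 0 := by
    rw [← hcollapse, key]; linarith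
  have hpos := hPipos d' i0
  have hQle : Qd d' i0 ≤ Qd dstar i0 := by nlinarith
  have hQ' : Qd d' i0 = (∑ j, p a i0 j * g j) + r i0 a - β * (r i0 a - Jmu dstar) ^ 2 := by
    simp only [hQ, hf, hd'i0, hc]; ring
  have hQs : Qd dstar i0 = (∑ j, p (dstar i0) i0 j * g j) + r i0 (dstar i0)
      - β * (r i0 (dstar i0) - Jmu dstar) ^ 2 := by
    simp only [hQ, hf, hc]; ring
  rw [hQ', hQs] at hQle
  exact hQle
end

section
/- In the finite MDP setup with β > 0, let d be a deterministic policy with performance potential g and mean J^d_μ, and suppose the stationary distributions of all deterministic policies are strictly positive. If there exist a state k and an action a' such that ∑_j p a' k j * g j + r k a' - β*(r k a' - J^d_μ)^2 > ∑_j P^d k j * g j + r k (d k) - β*(r k (d k) - J^d_μ)^2, then the deterministic policy d' defined by d' k = a' and d' i = d i for i ≠ k satisfies J^{d'}_{μ,σ} > J^{d}_{μ,σ}. -/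
/-- Strict single-state policy improvement: if some action strictly improves
the mean-variance combined "Q-value" at a state, then the policy updated
at that single state has a strictly larger combined metric. -/
theorem mean_variance_single_state_improvement
    (S : ℕ) (hS : 1 ≤ S) (A : Type) [Fintype A] [Nonempty A] [DecidableEq A]
    (p : A → Matrix (Fin S) (Fin S) ℝ)
    (hp0 : ∀ a i j, 0 ≤ p a i j) (hp1 : ∀ a i, ∑ j, p a i j = 1)
    (r : Fin S → A → ℝ) (β : ℝ) (hβ : 0 < β)
    (Pi : (Fin S → A) → Fin S → ℝ)
    (hPipos : ∀ d i, 0 < Pi d i)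
    (hPi1 : ∀ d, ∑ i, Pi d i = 1)
    (hPistat : ∀ (d : Fin S → A) (j : Fin S), ∑ i, Pi d i * p (d i) i j = Pi d j)
    (Jmu Jms : (Fin S → A) → ℝ)
    (hJmu : ∀ d, Jmu d = ∑ i, Pi d i * r i (d i))
    (hJms : ∀ d, Jms d = Jmu d - β * ∑ i, Pi d i * (r i (d i) - Jmu d) ^ 2)
    (d : Fin S → A)
    (g : Fin S → ℝ)
    (hg : ∀ i, g i = r i (d i) - β * (r i (d i) - Jmu d) ^ 2
      - Jms d + ∑ j, p (d i) i j * g j)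
    (k : Fin S) (a' : A)
    (hstrict : (∑ j, p (d k) k j * g j) + r k (d k) - β * (r k (d k) - Jmu d) ^ 2
      < (∑ j, p a' k j * g j) + r k a' - β * (r k a' - Jmu d) ^ 2) :
    Jms d < Jms (Function.update d k a') := by

  set d' := Function.update d k a' with hd'
  have hd'k : d' k = a' := Function.update_self k a' d
  have hd'ne : ∀ i, i ≠ k → d' i = d i := fun i hi => Function.update_of_ne hi a' d
  set F : Fin S → A → ℝ := fun i a => r i a - β * (r i a - Jmu d) ^ 2 + ∑ j, p a i j * g j
    with hF
  have hFd : ∀ i, F i (d i) = g i + Jms d := by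
    intro i
    have := hg i
    simp only [hF]
    linarith
  have hFk : F k (d k) < F k a' := by
    simp only [hF]; linarith
  have hsum_lt : ∑ i, Pi d' i * F i (d i) < ∑ i, Pi d' i * F i (d' i) := by
    apply Finset.sum_lt_sum
    · intro i _
      rcases eq_or_ne i k with rfl | hik
      · rw [hd'k]
        exact mul_le_mul_of_nonneg_left hFk.le (hPipos d' i).le
      · rw [hd'ne i hik]
    · exact ⟨k, Finset.mem_univ k, by
        rw [hd'k]; exact mul_lt_mul_of_pos_left hFk (hPipos d' k)⟩
  have hleft : ∑ i, Pi d' i * F i (d i) = (∑ i, Pi d' i * g i) + Jms d := by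
    simp_rw [hFd, mul_add, Finset.sum_add_distrib, ← Finset.sum_mul, hPi1 d', one_mul]
  have hright : ∑ i, Pi d' i * F i (d' i)
      = (∑ i, Pi d' i * (r i (d' i) - β * (r i (d' i) - Jmu d) ^ 2))
        + ∑ i, Pi d' i * g i := by
    simp only [hF, mul_add, Finset.sum_add_distrib]
    congr 1
    calc ∑ i, Pi d' i * ∑ j, p (d' i) i j * g j
        = ∑ i, ∑ j, Pi d' i * p (d' i) i j * g j := by
          simp_rw [Finset.mul_sum, mul_assoc]
      _ = ∑ j, ∑ i, Pi d' i * p (d' i) i j * g j := Finset.sum_comm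
      _ = ∑ j, Pi d' j * g j := by
          refine Finset.sum_congr rfl fun j _ => ?_
          rw [← Finset.sum_mul, hPistat d' j]
  have key : Jms d < ∑ i, Pi d' i * (r i (d' i) - β * (r i (d' i) - Jmu d) ^ 2) := by
    rw [hleft, hright] at hsum_lt
    linarith
  have hsplit : ∑ i, Pi d' i * (r i (d' i) - β * (r i (d' i) - Jmu d) ^ 2)
      = Jmu d' - β * ∑ i, Pi d' i * (r i (d' i) - Jmu d) ^ 2 := by
    have : ∀ i, Pi d' i * (r i (d' i) - β * (r i (d' i) - Jmu d) ^ 2)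
        = Pi d' i * r i (d' i) - β * (Pi d' i * (r i (d' i) - Jmu d) ^ 2) :=
      fun i => by ring
    simp_rw [this, Finset.sum_sub_distrib, ← Finset.mul_sum, hJmu d']
  have hvar : ∑ i, Pi d' i * (r i (d' i) - Jmu d) ^ 2
      = (∑ i, Pi d' i * (r i (d' i) - Jmu d') ^ 2) + (Jmu d' - Jmu d) ^ 2 := by
    have : ∀ i, Pi d' i * (r i (d' i) - Jmu d) ^ 2
        = Pi d' i * (r i (d' i) - Jmu d') ^ 2
          + 2 * (Jmu d' - Jmu d) * (Pi d' i * r i (d' i))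
          + ((Jmu d) ^ 2 - (Jmu d') ^ 2) * Pi d' i := fun i => by ring
    have h2 : ∑ i, 2 * (Jmu d' - Jmu d) * (Pi d' i * r i (d' i))
        = 2 * (Jmu d' - Jmu d) * Jmu d' := by
      rw [← Finset.mul_sum, ← hJmu d']
    have h3 : ∑ i, ((Jmu d) ^ 2 - (Jmu d') ^ 2) * Pi d' i
        = (Jmu d) ^ 2 - (Jmu d') ^ 2 := by
      rw [← Finset.mul_sum, hPi1 d', mul_one]
    simp_rw [this, Finset.sum_add_distrib, h2, h3]
    ring
  have hnn : 0 ≤ β * (Jmu d' - Jmu d) ^ 2 := by positivity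
  rw [hJms d']
  rw [hsplit, hvar] at key
  nlinarith [key, hnn]
end

section
/- Let P and P' be row-stochastic matrices on Fin S with stationary distributions π and π' respectively, let r, r' : Fin S → ℝ, let β be real, and let g be a performance potential for (P, π, r, β) with mean J_μ; write J'_μ for the mean under (P', π', r'). Then J'_{μ,σ} - J_{μ,σ} = ∑_i π' i * ( ∑_j (P' i j - P i j) * g j + r' i - β*(r' i - J'_μ)^2 - r i + β*(r i - J_μ)^2 ), where J_{μ,σ} and J'_{μ,σ} are the mean-variance combined metrics under (P, π, r) and (P', π', r'). -/
/-- Performance difference formula (equation (17)), before the recentering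
of the quadratic term: each policy's variance term is centered at its own mean. -/
theorem mean_variance_difference_formula_raw
    (S : ℕ) (hS : 1 ≤ S)
    (P P' : Matrix (Fin S) (Fin S) ℝ)
    (hP0 : ∀ i j, 0 ≤ P i j) (hP1 : ∀ i, ∑ j, P i j = 1)
    (hP'0 : ∀ i j, 0 ≤ P' i j) (hP'1 : ∀ i, ∑ j, P' i j = 1)
    (π π' : Fin S → ℝ)
    (hπ0 : ∀ i, 0 ≤ π i) (hπ1 : ∑ i, π i = 1)
    (hπstat : ∀ j, ∑ i, π i * P i j = π j)
    (hπ'0 : ∀ i, 0 ≤ π' i) (hπ'1 : ∑ i, π' i = 1)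
    (hπ'stat : ∀ j, ∑ i, π' i * P' i j = π' j)
    (r r' : Fin S → ℝ) (β : ℝ)
    (Jmu Jmu' Jms Jms' : ℝ)
    (hJmu : Jmu = ∑ i, π i * r i)
    (hJmu' : Jmu' = ∑ i, π' i * r' i)
    (hJms : Jms = Jmu - β * ∑ i, π i * (r i - Jmu) ^ 2)
    (hJms' : Jms' = Jmu' - β * ∑ i, π' i * (r' i - Jmu') ^ 2)
    (g : Fin S → ℝ)
    (hg : ∀ i, g i = r i - β * (r i - Jmu) ^ 2 - Jms + ∑ j, P i j * g j) :
    Jms' - Jms =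
      ∑ i, π' i * ((∑ j, (P' i j - P i j) * g j)
        + r' i - β * (r' i - Jmu') ^ 2 - r i + β * (r i - Jmu) ^ 2) := by
  have hP : ∀ i, ∑ j, P i j * g j = g i - r i + β * (r i - Jmu) ^ 2 + Jms := by
    intro i; have := hg i; linarith
  have h1 : ∑ i, π' i * ∑ j, P' i j * g j = ∑ i, π' i * g i := by
    calc ∑ i, π' i * ∑ j, P' i j * g j
        = ∑ i, ∑ j, π' i * P' i j * g j := by
          simp [Finset.mul_sum, mul_assoc]
      _ = ∑ j, (∑ i, π' i * P' i j) * g j := by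
          rw [Finset.sum_comm]; simp [Finset.sum_mul]
      _ = ∑ i, π' i * g i := by simp [hπ'stat]
  have h2 : ∑ i, π' i * (r' i - β * (r' i - Jmu') ^ 2) = Jms' := by
    rw [hJms', hJmu', Finset.mul_sum]
    rw [← Finset.sum_sub_distrib]
    refine Finset.sum_congr rfl fun i _ => by ring
  have h3 : ∑ i, π' i * Jms = Jms := by rw [← Finset.sum_mul, hπ'1, one_mul]
  have expand : ∀ i ∈ Finset.univ, π' i * ((∑ j, (P' i j - P i j) * g j)
        + r' i - β * (r' i - Jmu') ^ 2 - r i + β * (r i - Jmu) ^ 2)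
      = π' i * (∑ j, P' i j * g j) - π' i * g i
        + π' i * (r' i - β * (r' i - Jmu') ^ 2) - π' i * Jms := by
    intro i _
    have hsub : ∑ j, (P' i j - P i j) * g j
        = (∑ j, P' i j * g j) - ∑ j, P i j * g j := by
      rw [← Finset.sum_sub_distrib]
      refine Finset.sum_congr rfl fun j _ => by ring
    rw [hsub, hP i]; ring
  rw [Finset.sum_congr rfl expand]
  simp only [Finset.sum_sub_distrib, Finset.sum_add_distrib]
  rw [h1, h2, h3]; ring
end

section
/- Let P and P' be row-stochastic matrices on Fin S, r, r' : Fin S → ℝ, β real, π a stationary distribution of P with mean J_μ, combined metric J_{μ,σ}, and performance potential g. For δ ∈ [0,1] set P^δ = P + δ•(P' - P) and r^δ = r + δ•(r' - r), let π^δ be a stationary distribution of P^δ, set J^δ_μ = ∑_i π^δ i * r^δ i, f^δ i = (1-δ)*(r i - β*(r i - J^δ_μ)^2) + δ*(r' i - β*(r' i - J^δ_μ)^2), and J^δ_{μ,σ} = ∑_i π^δ i * f^δ i. Then J^δ_{μ,σ} - J_{μ,σ} = δ * ∑_i π^δ i * ( ∑_j (P' i j - P i j) * g j + r' i - β*(r'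 i - J_μ)^2 - r i + β*(r i - J_μ)^2 ) + β*(J^δ_μ - J_μ)^2. -/
/-!
Summing the Poisson equation `g = f - η + P g` against a stationary distribution `π'` of
another chain `Q` gives Cao's performance difference formula
`π' f' - η = π' ((Q - P) g + f' - f)`, because `π' Q g = π' g`. For the mixed chain
`P^δ - P = δ (P' - P)`, and the mixed reward evaluated at the old mean `J_μ` differs from
`f` by `δ (f' - f)`. Re-centring its squares at the new mean `J^δ_μ` costs exactly
`β (J^δ_μ - J_μ)²`, as in the bias–variance decomposition.
-/

open Finset Matrix

variable {ι R : Type*} [Fintype ι] [CommRing R]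

theorem sum_mul_sum_mul_eq_of_stationary {Q : Matrix ι ι R} {π : ι → R}
    (hπ : ∀ j, ∑ i, π i * Q i j = π j) (g : ι → R) :
    ∑ i, π i * ∑ j, Q i j * g j = ∑ i, π i * g i := by
  change π ⬝ᵥ (Q *ᵥ g) = π ⬝ᵥ g
  rw [dotProduct_mulVec, show π ᵥ* Q = π from funext hπ]

theorem performance_difference_of_poisson {P Q : Matrix ι ι R} {f f' g π : ι → R} {η : R}
    (hg : ∀ i, g i = f i - η + ∑ j, P i j * g j)
    (hπ1 : ∑ i, π i = 1) (hπ : ∀ j, ∑ i, π i * Q i j = π j) :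
    ∑ i, π i * f' i - η = ∑ i, π i * (∑ j, (Q i j - P i j) * g j + f' i - f i) := by
  have hpoint : ∀ i, π i * (∑ j, (Q i j - P i j) * g j + f' i - f i)
      = π i * ∑ j, Q i j * g j - π i * g i + π i * f' i - η * π i := by
    intro i
    simp only [sub_mul, sum_sub_distrib]
    linear_combination π i * hg i
  rw [sum_congr rfl fun i _ => hpoint i]
  simp only [sum_sub_distrib, sum_add_distrib, ← mul_sum,
    sum_mul_sum_mul_eq_of_stationary hπ, hπ1]
  ring

theorem sum_mul_mix_meanVar_recenter (w x y : ι → R) (β δ a b : R)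
    (hw : ∑ i, w i = 1) (ha : a = ∑ i, w i * (x i + δ * (y i - x i))) :
    ∑ i, w i * ((1 - δ) * (x i - β * (x i - a) ^ 2) + δ * (y i - β * (y i - a) ^ 2))
      = ∑ i, w i * ((1 - δ) * (x i - β * (x i - b) ^ 2) + δ * (y i - β * (y i - b) ^ 2))
        + β * (a - b) ^ 2 := by
  -- `(z - b)² - (z - a)² = (a - b) (2 z - a - b)`, and `z` averages to `a`.
  have hpoint : ∀ i,
      w i * ((1 - δ) * (x i - β * (x i - a) ^ 2) + δ * (y i - β * (y i - a) ^ 2))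
        = w i * ((1 - δ) * (x i - β * (x i - b) ^ 2) + δ * (y i - β * (y i - b) ^ 2))
          + β * (a - b) * (2 * (w i * (x i + δ * (y i - x i))) - (a + b) * w i) := by
    intro i; ring
  rw [sum_congr rfl fun i _ => hpoint i, sum_add_distrib, ← mul_sum, sum_sub_distrib,
    ← mul_sum, ← mul_sum, ← ha, hw]
  ring

theorem mean_variance_mixed_policy_difference_general
    (S : ℕ)
    (P P' : Matrix (Fin S) (Fin S) ℝ)
    (r r' : Fin S → ℝ) (β : ℝ)
    (Jmu Jms : ℝ)
    (g : Fin S → ℝ)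
    (hg : ∀ i, g i = r i - β * (r i - Jmu) ^ 2 - Jms + ∑ j, P i j * g j)
    (δ : ℝ)
    (πδ : Fin S → ℝ)
    (hπδ1 : ∑ i, πδ i = 1)
    (hπδstat : ∀ j, ∑ i, πδ i * (P i j + δ * (P' i j - P i j)) = πδ j)
    (Jδmu Jδms : ℝ)
    (hJδmu : Jδmu = ∑ i, πδ i * (r i + δ * (r' i - r i)))
    (hJδms : Jδms = ∑ i, πδ i *
      ((1 - δ) * (r i - β * (r i - Jδmu) ^ 2)
        + δ * (r' i - β * (r' i - Jδmu) ^ 2))) :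
    Jδms - Jms =
      δ * (∑ i, πδ i * ((∑ j, (P' i j - P i j) * g j)
        + r' i - β * (r' i - Jmu) ^ 2 - r i + β * (r i - Jmu) ^ 2))
      + β * (Jδmu - Jmu) ^ 2 := by
  rw [hJδms, sum_mul_mix_meanVar_recenter πδ r r' β δ Jδmu Jmu hπδ1 hJδmu, add_sub_right_comm,
    performance_difference_of_poisson (Q := fun i j => P i j + δ * (P' i j - P i j))
      hg hπδ1 hπδstat, mul_sum]
  congr 1
  refine sum_congr rfl fun i _ => ?_
  have hmix : ∑ j, (P i j + δ * (P' i j - P i j) - P i j) * g j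
      = δ * ∑ j, (P' i j - P i j) * g j := by
    rw [mul_sum]; exact sum_congr rfl fun j _ => by ring
  rw [hmix]
  ring

/-- Mixed-policy performance difference formula (equation (32)). -/
theorem mean_variance_mixed_policy_difference
    (S : ℕ) (hS : 1 ≤ S)
    (P P' : Matrix (Fin S) (Fin S) ℝ)
    (hP0 : ∀ i j, 0 ≤ P i j) (hP1 : ∀ i, ∑ j, P i j = 1)
    (hP'0 : ∀ i j, 0 ≤ P' i j) (hP'1 : ∀ i, ∑ j, P' i j = 1)
    (π : Fin S → ℝ)
    (hπ0 : ∀ i, 0 ≤ π i) (hπ1 : ∑ i, π i = 1)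
    (hπstat : ∀ j, ∑ i, π i * P i j = π j)
    (r r' : Fin S → ℝ) (β : ℝ)
    (Jmu Jms : ℝ)
    (hJmu : Jmu = ∑ i, π i * r i)
    (hJms : Jms = Jmu - β * ∑ i, π i * (r i - Jmu) ^ 2)
    (g : Fin S → ℝ)
    (hg : ∀ i, g i = r i - β * (r i - Jmu) ^ 2 - Jms + ∑ j, P i j * g j)
    (δ : ℝ) (hδ : δ ∈ Set.Icc (0 : ℝ) 1)
    (πδ : Fin S → ℝ)
    (hπδ0 : ∀ i, 0 ≤ πδ i) (hπδ1 : ∑ i, πδ i = 1)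
    (hπδstat : ∀ j, ∑ i, πδ i * (P i j + δ * (P' i j - P i j)) = πδ j)
    (Jδmu Jδms : ℝ)
    (hJδmu : Jδmu = ∑ i, πδ i * (r i + δ * (r' i - r i)))
    (hJδms : Jδms = ∑ i, πδ i *
      ((1 - δ) * (r i - β * (r i - Jδmu) ^ 2)
        + δ * (r' i - β * (r' i - Jδmu) ^ 2))) :
    Jδms - Jms =
      δ * (∑ i, πδ i * ((∑ j, (P' i j - P i j) * g j)
        + r' i - β * (r' i - Jmu) ^ 2 - r i + β * (r i - Jmu) ^ 2))
      + β * (Jδmu - Jmu) ^ 2 :=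
  mean_variance_mixed_policy_difference_general S P P' r r' β Jmu Jms g hg δ πδ hπδ1 hπδstat Jδmu
    Jδms hJδmu hJδms
end

section
/- In the mixed-policy setup, suppose for each δ ∈ (0,1] a stationary distribution π^δ of P^δ is chosen such that π^δ i → π i for every i as δ → 0⁺, and such that (J^δ_μ - J_μ)/δ converges to a finite limit as δ → 0⁺, where J^δ_μ = ∑_i π^δ i * r^δ i. Then the one-sided limit lim_{δ→0⁺} (J^δ_{μ,σ} - J_{μ,σ})/δ exists and equals ∑_i π i * ( ∑_j (P' i j - P i j) * g j + r' i - β*(r' i - J_μ)^2 - r i + β*(r i - J_μ)^2 ). -/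
/-!
Write `f^δ i - J_{μ,σ}` with the Poisson equation. Moving the centre of the variance from `J_μ`
to `J^δ_μ` changes `r i - β (r i - J)²` by `β (J^δ_μ - J_μ) (2 r i - J^δ_μ - J_μ)`, and stationarity
of `π^δ` under `P + δ (P' - P)` turns `π^δ (g - P g)` into `δ π^δ (P' - P) g`. After dividing by `δ`
everything converges; the only term involving `L` tends to `β L ∑ π i (2 r i - 2 J_μ) = 0`.
-/

open Filter Topology Matrix

section MixedPolicy

variable {ι : Type*} [Fintype ι]

theorem dotProduct_sub_mulVec_eq_of_vecMul_add_smul_eq {P Q : Matrix ι ι ℝ} {p : ι → ℝ} {δ : ℝ}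
    (hp : p ᵥ* (P + δ • Q) = p) (g : ι → ℝ) :
    p ⬝ᵥ (g - P *ᵥ g) = δ * p ⬝ᵥ (Q *ᵥ g) := by
  calc p ⬝ᵥ (g - P *ᵥ g) = (p ᵥ* (P + δ • Q)) ⬝ᵥ g - (p ᵥ* P) ⬝ᵥ g := by
        rw [hp, dotProduct_sub, dotProduct_mulVec]
    _ = δ * p ⬝ᵥ (Q *ᵥ g) := by
        rw [vecMul_add, vecMul_smul, add_dotProduct, smul_dotProduct, dotProduct_mulVec,
          smul_eq_mul, add_sub_cancel_left]

theorem mixed_metric_sub_div_eq {P P' : Matrix ι ι ℝ} {p g r r' : ι → ℝ} {β J J' Jms δ : ℝ}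
    (hδ : δ ≠ 0) (hp1 : ∑ i, p i = 1) (hp : p ᵥ* (P + δ • (P' - P)) = p)
    (hg : ∀ i, g i = r i - β * (r i - J) ^ 2 - Jms + (P *ᵥ g) i) :
    (∑ i, p i * ((1 - δ) * (r i - β * (r i - J') ^ 2) + δ * (r' i - β * (r' i - J') ^ 2))
        - Jms) / δ
      = ∑ i, p i * (β * ((J' - J) / δ) * (2 * r i - J' - J) + ((P' - P) *ᵥ g) i
          + r' i - β * (r' i - J') ^ 2 - r i + β * (r i - J') ^ 2) := by
  have hstat := dotProduct_sub_mulVec_eq_of_vecMul_add_smul_eq hp g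
  simp only [dotProduct, Pi.sub_apply] at hstat
  rw [div_eq_iff hδ, Finset.sum_mul]
  calc ∑ i, p i * ((1 - δ) * (r i - β * (r i - J') ^ 2) + δ * (r' i - β * (r' i - J') ^ 2))
        - Jms
      = ∑ i, (p i * (β * (J' - J) * (2 * r i - J' - J)
          + δ * (r' i - β * (r' i - J') ^ 2 - r i + β * (r i - J') ^ 2))
          + p i * (g i - (P *ᵥ g) i)) := by
        have hJms : Jms = ∑ i, p i * Jms := by rw [← Finset.sum_mul, hp1, one_mul]
        rw [hJms, ← Finset.sum_sub_distrib]
        refine Finset.sum_congr rfl fun i _ => ?_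
        linear_combination -p i * hg i
    _ = _ := by
        rw [Finset.sum_add_distrib, hstat, Finset.mul_sum, ← Finset.sum_add_distrib]
        refine Finset.sum_congr rfl fun i _ => ?_
        field_simp
        ring

theorem tendsto_of_tendsto_sub_div_nhdsGT {u : ℝ → ℝ} {a L : ℝ}
    (h : Tendsto (fun δ => (u δ - a) / δ) (𝓝[>] 0) (𝓝 L)) : Tendsto u (𝓝[>] 0) (𝓝 a) := by
  have hδ : Tendsto (fun δ : ℝ => δ) (𝓝[>] 0) (𝓝 0) := nhdsWithin_le_nhds
  have := (h.mul hδ).add_const a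
  rw [mul_zero, zero_add] at this
  refine this.congr' ?_
  filter_upwards [self_mem_nhdsWithin] with δ (hδ : 0 < δ)
  field_simp
  ring

theorem tendsto_mixed_metric_sub_div_expansion {l : Filter ℝ} {p : ℝ → ι → ℝ}
    {π r r' c : ι → ℝ} {q J' : ℝ → ℝ} {β J L : ℝ} (hπ1 : ∑ i, π i = 1)
    (hJ : J = ∑ i, π i * r i) (hp : ∀ i, Tendsto (fun δ => p δ i) l (𝓝 (π i)))
    (hq : Tendsto q l (𝓝 L)) (hJ' : Tendsto J' l (𝓝 J)) :
    Tendsto (fun δ => ∑ i, p δ i * (β * q δ * (2 * r i - J' δ - J) + c i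
        + r' i - β * (r' i - J' δ) ^ 2 - r i + β * (r i - J' δ) ^ 2)) l
      (𝓝 (∑ i, π i * (c i + r' i - β * (r' i - J) ^ 2 - r i + β * (r i - J) ^ 2))) := by
  have hlim := tendsto_finsetSum Finset.univ fun i _ => (hp i).mul
    (((by fun_prop : Continuous fun x : ℝ × ℝ => β * x.1 * (2 * r i - x.2 - J)
        + c i + r' i - β * (r' i - x.2) ^ 2 - r i + β * (r i - x.2) ^ 2).tendsto
      (L, J)).comp (hq.prodMk_nhds hJ'))
  have hcentered : ∑ i, π i * (r i - J) = 0 := by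
    simp only [mul_sub, Finset.sum_sub_distrib, ← Finset.sum_mul, hπ1, hJ, one_mul, sub_self]
  have hvalue : ∑ i, π i * (β * L * (2 * r i - J - J) + c i
        + r' i - β * (r' i - J) ^ 2 - r i + β * (r i - J) ^ 2)
      = ∑ i, π i * (c i + r' i - β * (r' i - J) ^ 2 - r i + β * (r i - J) ^ 2) := by
    calc _ = 2 * β * L * ∑ i, π i * (r i - J)
          + ∑ i, π i * (c i + r' i - β * (r' i - J) ^ 2 - r i + β * (r i - J) ^ 2) := by
          rw [Finset.mul_sum, ← Finset.sum_add_distrib]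
          exact Finset.sum_congr rfl fun i _ => by ring
      _ = _ := by rw [hcentered, mul_zero, zero_add]
  rw [← hvalue]
  exact hlim

end MixedPolicy

theorem mean_variance_mixed_policy_derivative_general
    (S : ℕ)
    (P P' : Matrix (Fin S) (Fin S) ℝ)
    (π : Fin S → ℝ)
    (hπ1 : ∑ i, π i = 1)
    (r r' : Fin S → ℝ) (β : ℝ)
    (Jmu Jms : ℝ)
    (hJmu : Jmu = ∑ i, π i * r i)
    (g : Fin S → ℝ)
    (hg : ∀ i, g i = r i - β * (r i - Jmu) ^ 2 - Jms + ∑ j, P i j * g j)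
    (πδ : ℝ → Fin S → ℝ)
    (hπδ1 : ∀ δ ∈ Set.Ioc (0 : ℝ) 1, ∑ i, πδ δ i = 1)
    (hπδstat : ∀ δ ∈ Set.Ioc (0 : ℝ) 1,
      ∀ j, ∑ i, πδ δ i * (P i j + δ * (P' i j - P i j)) = πδ δ j)
    (hπδtend : ∀ i, Tendsto (fun δ => πδ δ i) (𝓝[>] (0 : ℝ)) (𝓝 (π i)))
    (Jδmu : ℝ → ℝ)
    (L : ℝ)
    (hL : Tendsto (fun δ => (Jδmu δ - Jmu) / δ) (𝓝[>] (0 : ℝ)) (𝓝 L))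
    (Jδms : ℝ → ℝ)
    (hJδms : ∀ δ, Jδms δ = ∑ i, πδ δ i *
      ((1 - δ) * (r i - β * (r i - Jδmu δ) ^ 2)
        + δ * (r' i - β * (r' i - Jδmu δ) ^ 2))) :
    Tendsto (fun δ => (Jδms δ - Jms) / δ) (𝓝[>] (0 : ℝ))
      (𝓝 (∑ i, π i * ((∑ j, (P' i j - P i j) * g j)
        + r' i - β * (r' i - Jmu) ^ 2 - r i + β * (r i - Jmu) ^ 2))) := by
  have hquot : ∀ᶠ δ in 𝓝[>] (0 : ℝ), ∑ i, πδ δ i * (β * ((Jδmu δ - Jmu) / δ)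
      * (2 * r i - Jδmu δ - Jmu) + ((P' - P) *ᵥ g) i
        + r' i - β * (r' i - Jδmu δ) ^ 2 - r i + β * (r i - Jδmu δ) ^ 2)
      = (Jδms δ - Jms) / δ := by
    filter_upwards [Ioc_mem_nhdsGT zero_lt_one] with δ hδ
    rw [hJδms]
    exact (mixed_metric_sub_div_eq hδ.1.ne' (hπδ1 δ hδ) (funext (hπδstat δ hδ)) hg).symm
  exact (tendsto_mixed_metric_sub_div_expansion hπ1 hJmu hπδtend hL
    (tendsto_of_tendsto_sub_div_nhdsGT hL)).congr' hquot

/-- Performance derivative formula in the mixed policy space (Lemma 2). -/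
theorem mean_variance_mixed_policy_derivative
    (S : ℕ) (hS : 1 ≤ S)
    (P P' : Matrix (Fin S) (Fin S) ℝ)
    (hP0 : ∀ i j, 0 ≤ P i j) (hP1 : ∀ i, ∑ j, P i j = 1)
    (hP'0 : ∀ i j, 0 ≤ P' i j) (hP'1 : ∀ i, ∑ j, P' i j = 1)
    (π : Fin S → ℝ)
    (hπ0 : ∀ i, 0 ≤ π i) (hπ1 : ∑ i, π i = 1)
    (hπstat : ∀ j, ∑ i, π i * P i j = π j)
    (r r' : Fin S → ℝ) (β : ℝ)
    (Jmu Jms : ℝ)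
    (hJmu : Jmu = ∑ i, π i * r i)
    (hJms : Jms = Jmu - β * ∑ i, π i * (r i - Jmu) ^ 2)
    (g : Fin S → ℝ)
    (hg : ∀ i, g i = r i - β * (r i - Jmu) ^ 2 - Jms + ∑ j, P i j * g j)
    (πδ : ℝ → Fin S → ℝ)
    (hπδ0 : ∀ δ ∈ Set.Ioc (0 : ℝ) 1, ∀ i, 0 ≤ πδ δ i)
    (hπδ1 : ∀ δ ∈ Set.Ioc (0 : ℝ) 1, ∑ i, πδ δ i = 1)
    (hπδstat : ∀ δ ∈ Set.Ioc (0 : ℝ) 1,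
      ∀ j, ∑ i, πδ δ i * (P i j + δ * (P' i j - P i j)) = πδ δ j)
    (hπδtend : ∀ i, Tendsto (fun δ => πδ δ i) (𝓝[>] (0 : ℝ)) (𝓝 (π i)))
    (Jδmu : ℝ → ℝ)
    (hJδmu : ∀ δ, Jδmu δ = ∑ i, πδ δ i * (r i + δ * (r' i - r i)))
    (L : ℝ)
    (hL : Tendsto (fun δ => (Jδmu δ - Jmu) / δ) (𝓝[>] (0 : ℝ)) (𝓝 L))
    (Jδms : ℝ → ℝ)
    (hJδms : ∀ δ, Jδms δ = ∑ i, πδ δ i *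
      ((1 - δ) * (r i - β * (r i - Jδmu δ) ^ 2)
        + δ * (r' i - β * (r' i - Jδmu δ) ^ 2))) :
    Tendsto (fun δ => (Jδms δ - Jms) / δ) (𝓝[>] (0 : ℝ))
      (𝓝 (∑ i, π i * ((∑ j, (P' i j - P i j) * g j)
        + r' i - β * (r' i - Jmu) ^ 2 - r i + β * (r i - Jmu) ^ 2))) :=
  mean_variance_mixed_policy_derivative_general S P P' π hπ1 r r' β Jmu Jms hJmu g hg πδ hπδ1
    hπδstat hπδtend Jδmu L hL Jδms hJδms
end

section
/- In the randomized-policy MDP setup, let θ and θ' be randomized policies and for ε ∈ [0,1] let θ_ε = θ + ε•(θ' - θ) (which is again a randomized policy). Suppose stationary distributions π^{θ_ε} are chosen so that π^{θ_ε} i → π^θ i for all i as ε → 0⁺ and (J^{θ_ε}_μ - J^θ_μ)/ε converges to a finite limit as ε → 0⁺. If g^θ is a performance potential for θ, then lim_{ε→0⁺} (J^{θ_ε}_{μ,σ} - J^{θ}_{μ,σ})/ε = ∑_i π^θ i * ∑_a (θ' i a - θ i a) * ( ∑_j p a i j * g^θ j + r i a - β*(r i a)^2 + 2*β*J^θ_μ*(r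 i a) ). -/
/-!
Write `θ_ε = θ + ε Δ` with `Δ = θ' - θ`. The Poisson equation for `g` and the stationarity of
`π_ε` give the performance difference formula `π_ε f^θ - J_{μ,σ} = π_ε (P^{θ_ε} - P^θ) g`, and
`P^{θ_ε} - P^θ = ε P^Δ`. The reward of `θ_ε`, centred at its own mean `J^{θ_ε}_μ`, differs from
`f^θ` by `ε`-terms in `Δ` and by `β (J^{θ_ε}_μ - J_μ) ∑_a θ (2 r - J_μ - J^{θ_ε}_μ)`. After
division by `ε` the first factor of the latter tends to `L`, while its `π_ε`-average tends to
`2 J_μ - 2 J_μ = 0`. Finally `∑_a Δ i a = 0`, so the constant `-β J_μ²` in `-β (r - J_μ)²` drops out.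
-/

open Filter Topology Finset

section MeanVariance

variable {ι A : Type*} [Fintype ι] [Fintype A]

theorem performance_difference_of_poisson_s9 {P P' : Matrix ι ι ℝ} {π' f g : ι → ℝ} {J : ℝ}
    (hπ'1 : ∑ i, π' i = 1) (hπ'stat : ∀ j, ∑ i, π' i * P' i j = π' j)
    (hg : ∀ i, g i = f i - J + ∑ j, P i j * g j) :
    ∑ i, π' i * f i - J = ∑ i, π' i * ∑ j, (P' i j - P i j) * g j := by
  have hπ'g : ∑ i, π' i * g i = ∑ i, π' i * ∑ j, P' i j * g j := by
    simp_rw [mul_sum, ← mul_assoc]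
    rw [sum_comm]
    simp_rw [← sum_mul, hπ'stat]
  have hπ'f : ∑ i, π' i * f i = ∑ i, π' i * g i + J - ∑ i, π' i * ∑ j, P i j * g j := by
    rw [← mul_one J, ← hπ'1, mul_sum, ← sum_add_distrib, ← sum_sub_distrib]
    exact sum_congr rfl fun i _ => by rw [hg i]; ring
  simp_rw [sub_mul, sum_sub_distrib, mul_sub, sum_sub_distrib]
  linarith

theorem sum_mixture_kernel_sub_mul (w w' : A → ℝ) (p : A → ι → ℝ)
    (g : ι → ℝ) (ε : ℝ) :
    ∑ j, (∑ a, (w a + ε * (w' a - w a)) * p a j - ∑ a, w a * p a j) * g j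
      = ε * ∑ a, (w' a - w a) * ∑ j, p a j * g j := by
  simp_rw [← sum_sub_distrib, sum_mul, mul_sum]
  rw [sum_comm]
  exact sum_congr rfl fun a _ => sum_congr rfl fun j _ => by ring

theorem sum_mixture_meanVar_sub (w w' c : A → ℝ) (β m x ε : ℝ) :
    ∑ a, (w a + ε * (w' a - w a)) * (c a - β * (c a - x) ^ 2)
        - ∑ a, w a * (c a - β * (c a - m) ^ 2)
      = β * (x - m) * ∑ a, w a * (2 * c a - m - x)
        + ε * ∑ a, (w' a - w a) * (c a - β * (c a - x) ^ 2) := by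
  simp_rw [mul_sum, ← sum_sub_distrib, ← sum_add_distrib]
  exact sum_congr rfl fun a _ => by ring

theorem sum_sub_mul_meanVar_of_sum_eq {w w' : A → ℝ} (hw : ∑ a, w' a = ∑ a, w a)
    (q c : A → ℝ) (β m : ℝ) :
    ∑ a, (w' a - w a) * (q a + c a - β * (c a - m) ^ 2)
      = ∑ a, (w' a - w a) * (q a + c a - β * c a ^ 2 + 2 * β * m * c a) := by
  have hΔ : ∑ a, (w' a - w a) = 0 := by rw [sum_sub_distrib, hw, sub_self]
  calc ∑ a, (w' a - w a) * (q a + c a - β * (c a - m) ^ 2)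
      = ∑ a, ((w' a - w a) * (q a + c a - β * c a ^ 2 + 2 * β * m * c a)
          - β * m ^ 2 * (w' a - w a)) := sum_congr rfl fun a _ => by ring
    _ = _ := by rw [sum_sub_distrib, ← mul_sum, hΔ, mul_zero, sub_zero]

theorem sum_mul_sum_mul_centered_eq_zero {π : ι → ℝ} {w r : ι → A → ℝ} {m : ℝ}
    (hw : ∀ i, ∑ a, w i a = 1) (hπ : ∑ i, π i = 1) (hm : m = ∑ i, π i * ∑ a, w i a * r i a) :
    ∑ i, π i * ∑ a, w i a * (2 * r i a - m - m) = 0 := by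
  have hcentered : ∀ i, ∑ a, w i a * (2 * r i a - m - m) = 2 * ∑ a, w i a * r i a - 2 * m := by
    intro i
    simp_rw [mul_sub, sum_sub_distrib, ← sum_mul, hw i, mul_sum]
    ring_nf
  simp_rw [hcentered, mul_sub, sum_sub_distrib, ← sum_mul, hπ, mul_left_comm _ (2 : ℝ), ← mul_sum,
    ← hm]
  ring

theorem mixture_meanVar_performance_difference (p : A → Matrix ι ι ℝ) (r : ι → A → ℝ) (β : ℝ)
    (θ θ' : ι → A → ℝ) (Jmu Jms : ℝ) (g : ι → ℝ)
    (hg : ∀ i, g i = (∑ a, θ i a * (r i a - β * (r i a - Jmu) ^ 2)) - Jms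
      + ∑ j, (∑ a, θ i a * p a i j) * g j)
    (ε : ℝ) (π' : ι → ℝ) (hπ'1 : ∑ i, π' i = 1)
    (hπ'stat : ∀ j, ∑ i, π' i * (∑ a, (θ i a + ε * (θ' i a - θ i a)) * p a i j) = π' j)
    (x : ℝ) :
    ∑ i, π' i * ∑ a, (θ i a + ε * (θ' i a - θ i a)) * (r i a - β * (r i a - x) ^ 2) - Jms
      = ε * ∑ i, π' i * ∑ a, (θ' i a - θ i a) *
          ((∑ j, p a i j * g j) + r i a - β * (r i a - x) ^ 2)
        + β * (x - Jmu) * ∑ i, π' i * ∑ a, θ i a * (2 * r i a - Jmu - x) := by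
  have hdiff := performance_difference_of_poisson_s9 hπ'1 hπ'stat hg
  have hkernel : ∑ i, π' i * ∑ j, ((∑ a, (θ i a + ε * (θ' i a - θ i a)) * p a i j)
        - ∑ a, θ i a * p a i j) * g j
      = ε * ∑ i, π' i * ∑ a, (θ' i a - θ i a) * ∑ j, p a i j * g j := by
    rw [mul_sum]
    exact sum_congr rfl fun i _ => by
      rw [sum_mixture_kernel_sub_mul (θ i) (θ' i) (fun a => p a i), mul_left_comm]
  have hreward : ∑ i, π' i * ∑ a, (θ i a + ε * (θ' i a - θ i a)) * (r i a - β * (r i a - x) ^ 2)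
        - ∑ i, π' i * ∑ a, θ i a * (r i a - β * (r i a - Jmu) ^ 2)
      = β * (x - Jmu) * ∑ i, π' i * ∑ a, θ i a * (2 * r i a - Jmu - x)
        + ε * ∑ i, π' i * ∑ a, (θ' i a - θ i a) * (r i a - β * (r i a - x) ^ 2) := by
    rw [← sum_sub_distrib, mul_sum, mul_sum, ← sum_add_distrib]
    exact sum_congr rfl fun i _ => by rw [← mul_sub, sum_mixture_meanVar_sub]; ring
  have hsplit : ∑ i, π' i * ∑ a, (θ' i a - θ i a) *
        ((∑ j, p a i j * g j) + r i a - β * (r i a - x) ^ 2)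
      = ∑ i, π' i * ∑ a, (θ' i a - θ i a) * ∑ j, p a i j * g j
        + ∑ i, π' i * ∑ a, (θ' i a - θ i a) * (r i a - β * (r i a - x) ^ 2) := by
    rw [← sum_add_distrib]
    refine sum_congr rfl fun i _ => ?_
    rw [← mul_add, ← sum_add_distrib]
    exact congrArg _ (sum_congr rfl fun a _ => by ring)
  linear_combination hreward + hdiff + hkernel - ε * hsplit

theorem tendsto_of_tendsto_sub_div_nhdsGT_s9 {x : ℝ → ℝ} {x₀ L : ℝ}
    (h : Tendsto (fun ε => (x ε - x₀) / ε) (𝓝[>] 0) (𝓝 L)) : Tendsto x (𝓝[>] 0) (𝓝 x₀) := by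
  have hid : Tendsto (fun ε : ℝ => ε) (𝓝[>] 0) (𝓝 0) := tendsto_nhdsWithin_of_tendsto_nhds tendsto_id
  have hlim := (h.mul hid).add_const x₀
  rw [mul_zero, zero_add] at hlim
  refine hlim.congr' ?_
  filter_upwards [self_mem_nhdsWithin] with ε (hε : 0 < ε)
  field_simp
  ring

theorem tendsto_sum_mul_comp {α : Type*} {l : Filter α} {π' : α → ι → ℝ}
    {π : ι → ℝ} {x : α → ℝ} {x₀ : ℝ} {h : ι → ℝ → ℝ}
    (hπ : ∀ i, Tendsto (fun t => π' t i) l (𝓝 (π i))) (hx : Tendsto x l (𝓝 x₀))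
    (hh : ∀ i, Continuous (h i)) :
    Tendsto (fun t => ∑ i, π' t i * h i (x t)) l (𝓝 (∑ i, π i * h i x₀)) :=
  tendsto_finsetSum _ fun i _ => (hπ i).mul (((hh i).tendsto x₀).comp hx)

theorem mean_variance_randomized_policy_derivative_general
    (S : ℕ) (A : Type) [Fintype A]
    (p : A → Matrix (Fin S) (Fin S) ℝ)
    (r : Fin S → A → ℝ) (β : ℝ)
    (θ θ' : Fin S → A → ℝ)
    (hθ1 : ∀ i, ∑ a, θ i a = 1)
    (hθ'1 : ∀ i, ∑ a, θ' i a = 1)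
    (πθ : Fin S → ℝ)
    (hπθ1 : ∑ i, πθ i = 1)
    (Jmu Jms : ℝ)
    (hJmu : Jmu = ∑ i, πθ i * ∑ a, θ i a * r i a)
    (g : Fin S → ℝ)
    (hg : ∀ i, g i = (∑ a, θ i a * (r i a - β * (r i a - Jmu) ^ 2)) - Jms
      + ∑ j, (∑ a, θ i a * p a i j) * g j)
    -- the intermediate policies θ_ε = θ + ε • (θ' - θ) and their data
    (πε : ℝ → Fin S → ℝ)
    (hπε1 : ∀ ε ∈ Set.Ioc (0 : ℝ) 1, ∑ i, πε ε i = 1)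
    (hπεstat : ∀ ε ∈ Set.Ioc (0 : ℝ) 1, ∀ j,
      ∑ i, πε ε i * (∑ a, (θ i a + ε * (θ' i a - θ i a)) * p a i j) = πε ε j)
    (hπεtend : ∀ i, Tendsto (fun ε => πε ε i) (𝓝[>] (0 : ℝ)) (𝓝 (πθ i)))
    (Jεmu : ℝ → ℝ)
    (L : ℝ)
    (hL : Tendsto (fun ε => (Jεmu ε - Jmu) / ε) (𝓝[>] (0 : ℝ)) (𝓝 L))
    (Jεms : ℝ → ℝ)
    (hJεms : ∀ ε, Jεms ε = ∑ i, πε ε i * ∑ a, (θ i a + ε * (θ' i a - θ i a)) *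
      (r i a - β * (r i a - Jεmu ε) ^ 2)) :
    Tendsto (fun ε => (Jεms ε - Jms) / ε) (𝓝[>] (0 : ℝ))
      (𝓝 (∑ i, πθ i * ∑ a, (θ' i a - θ i a) *
        ((∑ j, p a i j * g j) + r i a - β * (r i a) ^ 2 + 2 * β * Jmu * r i a))) := by
  have hJεmu := tendsto_of_tendsto_sub_div_nhdsGT_s9 hL
  have hdirection := tendsto_sum_mul_comp hπεtend hJεmu (h := fun i y => ∑ a, (θ' i a - θ i a) *
    ((∑ j, p a i j * g j) + r i a - β * (r i a - y) ^ 2)) fun i => by fun_prop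
  have hcurvature := tendsto_sum_mul_comp hπεtend hJεmu
    (h := fun i y => ∑ a, θ i a * (2 * r i a - Jmu - y)) fun i => by fun_prop
  rw [sum_mul_sum_mul_centered_eq_zero hθ1 hπθ1 hJmu] at hcurvature
  have hlim := hdirection.add ((hL.const_mul β).mul hcurvature)
  rw [mul_zero, add_zero] at hlim
  simp only [← sum_sub_mul_meanVar_of_sum_eq ((hθ'1 _).trans (hθ1 _).symm)]
  refine hlim.congr' ?_
  filter_upwards [Ioc_mem_nhdsGT one_pos] with ε hε
  rw [hJεms, mixture_meanVar_performance_difference p r β θ θ' Jmu Jms g hg ε (πε ε) (hπε1 ε hε)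
    (hπεstat ε hε), add_div, mul_div_cancel_left₀ _ hε.1.ne']
  ring

/-- Performance derivative formula in the randomized policy space (Lemma 3),
stated as a one-sided directional derivative from θ toward θ'. -/
theorem mean_variance_randomized_policy_derivative
    (S : ℕ) (hS : 1 ≤ S) (A : Type) [Fintype A] [Nonempty A]
    (p : A → Matrix (Fin S) (Fin S) ℝ)
    (hp0 : ∀ a i j, 0 ≤ p a i j) (hp1 : ∀ a i, ∑ j, p a i j = 1)
    (r : Fin S → A → ℝ) (β : ℝ)
    (θ θ' : Fin S → A → ℝ)
    (hθ0 : ∀ i a, 0 ≤ θ i a) (hθ1 : ∀ i, ∑ a, θ i a = 1)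
    (hθ'0 : ∀ i a, 0 ≤ θ' i a) (hθ'1 : ∀ i, ∑ a, θ' i a = 1)
    (πθ : Fin S → ℝ)
    (hπθ0 : ∀ i, 0 ≤ πθ i) (hπθ1 : ∑ i, πθ i = 1)
    (hπθstat : ∀ j, ∑ i, πθ i * (∑ a, θ i a * p a i j) = πθ j)
    (Jmu Jms : ℝ)
    (hJmu : Jmu = ∑ i, πθ i * ∑ a, θ i a * r i a)
    (hJms : Jms = ∑ i, πθ i * ∑ a, θ i a * (r i a - β * (r i a - Jmu) ^ 2))
    (g : Fin S → ℝ)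
    (hg : ∀ i, g i = (∑ a, θ i a * (r i a - β * (r i a - Jmu) ^ 2)) - Jms
      + ∑ j, (∑ a, θ i a * p a i j) * g j)
    -- the intermediate policies θ_ε = θ + ε • (θ' - θ) and their data
    (πε : ℝ → Fin S → ℝ)
    (hπε0 : ∀ ε ∈ Set.Ioc (0 : ℝ) 1, ∀ i, 0 ≤ πε ε i)
    (hπε1 : ∀ ε ∈ Set.Ioc (0 : ℝ) 1, ∑ i, πε ε i = 1)
    (hπεstat : ∀ ε ∈ Set.Ioc (0 : ℝ) 1, ∀ j,
      ∑ i, πε ε i * (∑ a, (θ i a + ε * (θ' i a - θ i a)) * p a i j) = πε ε j)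
    (hπεtend : ∀ i, Tendsto (fun ε => πε ε i) (𝓝[>] (0 : ℝ)) (𝓝 (πθ i)))
    (Jεmu : ℝ → ℝ)
    (hJεmu : ∀ ε, Jεmu ε = ∑ i, πε ε i * ∑ a, (θ i a + ε * (θ' i a - θ i a)) * r i a)
    (L : ℝ)
    (hL : Tendsto (fun ε => (Jεmu ε - Jmu) / ε) (𝓝[>] (0 : ℝ)) (𝓝 L))
    (Jεms : ℝ → ℝ)
    (hJεms : ∀ ε, Jεms ε = ∑ i, πε ε i * ∑ a, (θ i a + ε * (θ' i a - θ i a)) *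
      (r i a - β * (r i a - Jεmu ε) ^ 2)) :
    Tendsto (fun ε => (Jεms ε - Jms) / ε) (𝓝[>] (0 : ℝ))
      (𝓝 (∑ i, πθ i * ∑ a, (θ' i a - θ i a) *
        ((∑ j, p a i j * g j) + r i a - β * (r i a) ^ 2 + 2 * β * Jmu * r i a))) :=
  mean_variance_randomized_policy_derivative_general S A p r β θ θ' hθ1 hθ'1 πθ hπθ1 Jmu Jms hJmu g
    hg πε hπε1 hπεstat hπεtend Jεmu L hL Jεms hJεms
end MeanVariance
end

section
/- Let P be a row-stochastic matrix on Fin S that is irreducible (for all states i, j there exists n ≥ 1 with (P^n) i j > 0), let π be a stationary distribution of P, let f : Fin S → ℝ, and set J = ∑_i π i * f i. Then (a) there exists g : Fin S → ℝ satisfying the Poisson equation g i = f i - J + ∑_j P i j * g j for all i; and (b) any two solutions of this Poisson equation differ by a constant, i.e. if g and g' both satisfy it then there is c : ℝ with g' i = g i + c for all i. -/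
/-!
The Poisson equation says `(1 - P) g = f - J • 1`. A `P`-harmonic vector `h` of an irreducible
stochastic matrix is constant (maximum principle): at a maximum `i`, `h i` is the `Pᵐ`-weighted
average of the `h k`, so `h k = h i` wherever `(Pᵐ) i k > 0`. Hence `ker (1 - P)` is the line of
constants, which gives uniqueness. By rank–nullity `range (1 - P)` then has codimension one; it is
contained in the kernel of `v ↦ π ⬝ᵥ v` because `π` is stationary, so the two coincide, and
`f - J • 1` lies in that kernel because `J` is the `π`-average of `f`.
-/

open Matrix Finset

namespace Matrix

theorem range_mulVecLin_eq_ker_dotProduct {K n : Type*} [Field K] [Fintype n]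
    {A : Matrix n n K} {u π : n → K} (hker : LinearMap.ker A.mulVecLin = K ∙ u)
    (hπA : π ᵥ* A = 0) (hπu : π ⬝ᵥ u ≠ 0) :
    LinearMap.range A.mulVecLin = LinearMap.ker (dotProductBilin K K π) := by
  have hu : u ≠ 0 := by rintro rfl; simp at hπu
  have hπ : dotProductBilin K K π ≠ 0 := fun h => hπu (by simpa using LinearMap.congr_fun h u)
  refine Submodule.eq_of_le_of_finrank_eq ?_ ?_
  · rintro _ ⟨g, rfl⟩
    simp [dotProduct_mulVec, hπA]
  · have hA := LinearMap.finrank_range_add_finrank_ker A.mulVecLin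
    have hπ := Module.Dual.finrank_ker_add_one_of_ne_zero hπ
    rw [hker, finrank_span_singleton hu] at hA
    omega

variable {R n : Type*} [Fintype n] [DecidableEq n]

theorem pow_mulVec_eq_self [Semiring R] {P : Matrix n n R} {v : n → R} (hv : P *ᵥ v = v)
    (m : ℕ) : (P ^ m) *ᵥ v = v := by
  induction m with
  | zero => simp
  | succ m ih => rw [pow_succ, ← mulVec_mulVec, hv, ih]

theorem one_sub_mulVec_eq_iff [Ring R] {P : Matrix n n R} {g b : n → R} :
    (1 - P) *ᵥ g = b ↔ ∀ i, g i = b i + ∑ j, P i j * g j := by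
  simp only [funext_iff, sub_mulVec, one_mulVec, sub_eq_iff_eq_add]
  rfl

section OrderedRing

variable [Ring R] [LinearOrder R] [IsStrictOrderedRing R] {P : Matrix n n R} {v : n → R}

theorem apply_eq_of_mulVec_eq_self_of_pow_apply_pos (hP : P ∈ rowStochastic R n)
    (hv : P *ᵥ v = v) {i j : n} (hmax : ∀ k, v k ≤ v i) {m : ℕ} (hij : 0 < (P ^ m) i j) :
    v j = v i := by
  have hPm := pow_mem hP m
  have hsum : ∑ k, (P ^ m) i k * (v i - v k) = 0 := by
    simp only [mul_sub, sum_sub_distrib, ← sum_mul, sum_row_of_mem_rowStochastic hPm, one_mul]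
    exact sub_eq_zero.2 (congrFun (pow_mulVec_eq_self hv m) i).symm
  have hterm := (sum_eq_zero_iff_of_nonneg fun k _ =>
    mul_nonneg (nonneg_of_mem_rowStochastic hPm) (sub_nonneg.2 (hmax k))).1 hsum j (mem_univ j)
  exact (sub_eq_zero.1 ((mul_eq_zero.1 hterm).resolve_left hij.ne')).symm

theorem IsIrreducible.exists_eq_const_of_mulVec_eq_self (hirr : P.IsIrreducible)
    (hP : P ∈ rowStochastic R n) (hv : P *ᵥ v = v) : ∃ c, v = Function.const n c := by
  cases isEmpty_or_nonempty n
  · exact ⟨0, Subsingleton.elim _ _⟩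
  obtain ⟨i, hi⟩ := Finite.exists_max v
  refine ⟨v i, funext fun j => ?_⟩
  obtain ⟨m, -, hij⟩ := (isIrreducible_iff_exists_pow_pos hirr.nonneg).1 hirr i j
  exact apply_eq_of_mulVec_eq_self_of_pow_apply_pos hP hv hi hij

end OrderedRing

theorem IsIrreducible.ker_mulVecLin_one_sub [CommRing R] [LinearOrder R] [IsStrictOrderedRing R]
    {P : Matrix n n R} (hirr : P.IsIrreducible)
    (hP : P ∈ rowStochastic R n) : LinearMap.ker (1 - P).mulVecLin = R ∙ (1 : n → R) := by
  apply le_antisymm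
  · intro v hv
    have hv : P *ᵥ v = v := by
      simpa [sub_mulVec, sub_eq_zero, eq_comm] using hv
    obtain ⟨c, rfl⟩ := hirr.exists_eq_const_of_mulVec_eq_self hP hv
    exact Submodule.mem_span_singleton.2 ⟨c, by ext; simp⟩
  · rw [Submodule.span_singleton_le_iff_mem, LinearMap.mem_ker, mulVecLin_apply, sub_mulVec,
      one_mulVec, one_vecMul_of_mem_rowStochastic hP, sub_self]

end Matrix

theorem poisson_equation_exists_unique_up_to_const_general
    (S : ℕ)
    (P : Matrix (Fin S) (Fin S) ℝ)
    (hP0 : ∀ i j, 0 ≤ P i j) (hP1 : ∀ i, ∑ j, P i j = 1)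
    (hirr : ∀ i j : Fin S, ∃ n : ℕ, 1 ≤ n ∧ 0 < (P ^ n) i j)
    (π : Fin S → ℝ)
    (hπ1 : ∑ i, π i = 1)
    (hπstat : ∀ j, ∑ i, π i * P i j = π j)
    (f : Fin S → ℝ) (J : ℝ) (hJ : J = ∑ i, π i * f i) :
    (∃ g : Fin S → ℝ, ∀ i, g i = f i - J + ∑ j, P i j * g j) ∧
    (∀ g g' : Fin S → ℝ,
      (∀ i, g i = f i - J + ∑ j, P i j * g j) →
      (∀ i, g' i = f i - J + ∑ j, P i j * g' j) →
      ∃ c : ℝ, ∀ i, g' i = g i + c) := by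
  have hP : P ∈ rowStochastic ℝ (Fin S) := mem_rowStochastic_iff_sum.2 ⟨hP0, hP1⟩
  have hker := ((isIrreducible_iff_exists_pow_pos hP0).2 hirr).ker_mulVecLin_one_sub hP
  refine ⟨?_, fun g g' hg hg' => ?_⟩
  · have hπP : π ᵥ* (1 - P) = 0 := by
      rw [vecMul_sub, vecMul_one, show π ᵥ* P = π from funext hπstat, sub_self]
    have hπone : π ⬝ᵥ 1 ≠ 0 := by simp [dotProduct_one, hπ1]
    have hf : (fun i => f i - J) ∈ LinearMap.ker (dotProductBilin ℝ ℝ π) := by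
      simp [dotProduct, mul_sub, sum_sub_distrib, ← sum_mul, hπ1, hJ]
    obtain ⟨g, hg⟩ := range_mulVecLin_eq_ker_dotProduct hker hπP hπone ▸ hf
    exact ⟨g, one_sub_mulVec_eq_iff.1 hg⟩
  · have hdiff : g' - g ∈ LinearMap.ker (1 - P).mulVecLin := by
      rw [LinearMap.mem_ker, mulVecLin_apply, mulVec_sub, one_sub_mulVec_eq_iff.2 hg,
        one_sub_mulVec_eq_iff.2 hg', sub_self]
    obtain ⟨c, hc⟩ := Submodule.mem_span_singleton.1 (hker ▸ hdiff)
    exact ⟨c, fun i => eq_add_of_sub_eq' (by simpa using (congrFun hc i).symm)⟩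

/-- Existence and uniqueness (up to an additive constant) of solutions of the
Poisson equation for an irreducible row-stochastic matrix. -/
theorem poisson_equation_exists_unique_up_to_const
    (S : ℕ) (hS : 1 ≤ S)
    (P : Matrix (Fin S) (Fin S) ℝ)
    (hP0 : ∀ i j, 0 ≤ P i j) (hP1 : ∀ i, ∑ j, P i j = 1)
    (hirr : ∀ i j : Fin S, ∃ n : ℕ, 1 ≤ n ∧ 0 < (P ^ n) i j)
    (π : Fin S → ℝ)
    (hπ0 : ∀ i, 0 ≤ π i) (hπ1 : ∑ i, π i = 1)
    (hπstat : ∀ j, ∑ i, π i * P i j = π j)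
    (f : Fin S → ℝ) (J : ℝ) (hJ : J = ∑ i, π i * f i) :
    (∃ g : Fin S → ℝ, ∀ i, g i = f i - J + ∑ j, P i j * g j) ∧
    (∀ g g' : Fin S → ℝ,
      (∀ i, g i = f i - J + ∑ j, P i j * g j) →
      (∀ i, g' i = f i - J + ∑ j, P i j * g' j) →
      ∃ c : ℝ, ∀ i, g' i = g i + c) :=
  poisson_equation_exists_unique_up_to_const_general S P hP0 hP1 hirr π hπ1 hπstat f J hJ
end

section
/- In the finite MDP setup with β > 0, suppose the mean reward is the same constant c for all deterministic policies, i.e. J^{d'}_μ = c for every deterministic policy d'. Let d be a deterministic policy with performance potential g such that for every state i and every action a: ∑_j p a i j * g j + r i a - β*(r i a - c)^2 ≤ ∑_j P^d i j * g j + r i (d i) - β*(r i (d i) - c)^2. Then d is globally optimal: J^{d'}_{μ,σ} ≤ J^{d}_{μ,σ} for every deterministic policy d'. -/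
/-- Global optimality under constant mean reward (Remarks 2 & 4): if every
deterministic policy has the same mean reward c, then a policy satisfying the
stopping condition of the policy iteration is globally optimal. -/
theorem mean_variance_global_optimality_constant_mean
    (S : ℕ) (hS : 1 ≤ S) (A : Type) [Fintype A] [Nonempty A]
    (p : A → Matrix (Fin S) (Fin S) ℝ)
    (hp0 : ∀ a i j, 0 ≤ p a i j) (hp1 : ∀ a i, ∑ j, p a i j = 1)
    (r : Fin S → A → ℝ) (β : ℝ) (hβ : 0 < β)
    (Pi : (Fin S → A) → Fin S → ℝ)
    (hPi0 : ∀ d i, 0 ≤ Pi d i)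
    (hPi1 : ∀ d, ∑ i, Pi d i = 1)
    (hPistat : ∀ (d : Fin S → A) (j : Fin S), ∑ i, Pi d i * p (d i) i j = Pi d j)
    (Jmu Jms : (Fin S → A) → ℝ)
    (hJmu : ∀ d, Jmu d = ∑ i, Pi d i * r i (d i))
    (hJms : ∀ d, Jms d = Jmu d - β * ∑ i, Pi d i * (r i (d i) - Jmu d) ^ 2)
    (c : ℝ) (hconst : ∀ d' : Fin S → A, Jmu d' = c)
    (d : Fin S → A)
    (g : Fin S → ℝ)
    (hg : ∀ i, g i = r i (d i) - β * (r i (d i) - Jmu d) ^ 2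
      - Jms d + ∑ j, p (d i) i j * g j)
    (hstop : ∀ (i : Fin S) (a : A),
      (∑ j, p a i j * g j) + r i a - β * (r i a - c) ^ 2
        ≤ (∑ j, p (d i) i j * g j) + r i (d i) - β * (r i (d i) - c) ^ 2) :
    ∀ d' : Fin S → A, Jms d' ≤ Jms d := by
  intro d'
  have hcd : Jmu d = c := hconst d
  have hc' : Jmu d' = c := hconst d'
  have key : ∀ i, (∑ j, p (d' i) i j * g j) + r i (d' i) - β * (r i (d' i) - c) ^ 2
      ≤ g i + Jms d := by
    intro i
    have h1 := hstop i (d' i)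
    have h2 := hg i
    rw [hcd] at h2
    linarith
  have hsum : ∑ i, Pi d' i * ((∑ j, p (d' i) i j * g j) + r i (d' i) - β * (r i (d' i) - c) ^ 2)
      ≤ ∑ i, Pi d' i * (g i + Jms d) :=
    Finset.sum_le_sum fun i _ => mul_le_mul_of_nonneg_left (key i) (hPi0 d' i)
  have e1 : ∑ i, Pi d' i * ∑ j, p (d' i) i j * g j = ∑ j, Pi d' j * g j := by
    simp_rw [Finset.mul_sum]
    rw [Finset.sum_comm]
    refine Finset.sum_congr rfl fun j _ => ?_
    rw [← hPistat d' j, Finset.sum_mul]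
    exact Finset.sum_congr rfl fun i _ => by ring
  have L : ∑ i, Pi d' i * ((∑ j, p (d' i) i j * g j) + r i (d' i) - β * (r i (d' i) - c) ^ 2)
      = (∑ j, Pi d' j * g j) + Jmu d' - β * ∑ i, Pi d' i * (r i (d' i) - c) ^ 2 := by
    rw [hJmu, Finset.mul_sum, ← e1]
    rw [← Finset.sum_add_distrib, ← Finset.sum_sub_distrib]
    exact Finset.sum_congr rfl fun i _ => by ring
  have R : ∑ i, Pi d' i * (g i + Jms d) = (∑ j, Pi d' j * g j) + Jms d := by
    simp_rw [mul_add, Finset.sum_add_distrib, ← Finset.sum_mul, hPi1, one_mul]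
  have hJ : Jms d' = c - β * ∑ i, Pi d' i * (r i (d' i) - c) ^ 2 := by
    rw [hJms, hc']
  rw [L, R, hc'] at hsum
  linarith
end

section
/- In the randomized-policy MDP setup with β real, let d : Fin S → A be a deterministic policy viewed as the randomized policy θ_d (θ_d i a = 1 if a = d i, else 0), with stationary distribution π^{θ_d}, mean J^d_μ, combined metric J^d_{μ,σ}, and performance potential g. Suppose the stopping condition holds: for every state i and action a, ∑_j p a i j * g j + r i a - β*(r i a)^2 + 2*β*J^d_μ*(r i a) ≤ ∑_j p (d i) i j * g j + r i (d i) - β*(r i (d i))^2 + 2*β*J^d_μ*(r i (d i)). Then for every randomized policy θ' with stationary distribution π^{θ'} having nonnegative entries: J^{θ'}_{μ,σ} - J^{d}_{μ,σ} ≤ β*(J^{θ'}_μ - J^{d}_μ)^2. -/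
/-- At a stopping point of the policy iteration (a deterministic policy d),
the combined-metric gain of any randomized policy over d is bounded by the
square term β (J^{θ'}_μ - J^d_μ)². -/
theorem mean_variance_stopping_bound
    (S : ℕ) (hS : 1 ≤ S) (A : Type) [Fintype A] [Nonempty A] [DecidableEq A]
    (p : A → Matrix (Fin S) (Fin S) ℝ)
    (hp0 : ∀ a i j, 0 ≤ p a i j) (hp1 : ∀ a i, ∑ j, p a i j = 1)
    (r : Fin S → A → ℝ) (β : ℝ)
    (d : Fin S → A)
    -- stationary distribution of the deterministic policy d, viewed as the
    -- randomized policy θ_d i a = if a = d i then 1 else 0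
    (πd : Fin S → ℝ)
    (hπd0 : ∀ i, 0 ≤ πd i) (hπd1 : ∑ i, πd i = 1)
    (hπdstat : ∀ j, ∑ i, πd i *
      (∑ a, (if a = d i then (1 : ℝ) else 0) * p a i j) = πd j)
    (Jdmu Jdms : ℝ)
    (hJdmu : Jdmu = ∑ i, πd i * ∑ a, (if a = d i then (1 : ℝ) else 0) * r i a)
    (hJdms : Jdms = ∑ i, πd i * ∑ a, (if a = d i then (1 : ℝ) else 0) *
      (r i a - β * (r i a - Jdmu) ^ 2))
    (g : Fin S → ℝ)
    (hg : ∀ i, g i = (∑ a, (if a = d i then (1 : ℝ) else 0) *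
        (r i a - β * (r i a - Jdmu) ^ 2)) - Jdms
      + ∑ j, (∑ a, (if a = d i then (1 : ℝ) else 0) * p a i j) * g j)
    (hstop : ∀ (i : Fin S) (a : A),
      (∑ j, p a i j * g j) + r i a - β * (r i a) ^ 2 + 2 * β * Jdmu * r i a
        ≤ (∑ j, p (d i) i j * g j) + r i (d i) - β * (r i (d i)) ^ 2
          + 2 * β * Jdmu * r i (d i)) :
    ∀ (θ' : Fin S → A → ℝ),
      (∀ i a, 0 ≤ θ' i a) → (∀ i, ∑ a, θ' i a = 1) →
      ∀ (πθ' : Fin S → ℝ),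
        (∀ i, 0 ≤ πθ' i) → (∑ i, πθ' i = 1) →
        (∀ j, ∑ i, πθ' i * (∑ a, θ' i a * p a i j) = πθ' j) →
        ∀ (Jmu' Jms' : ℝ),
          Jmu' = (∑ i, πθ' i * ∑ a, θ' i a * r i a) →
          Jms' = (∑ i, πθ' i * ∑ a, θ' i a *
            (r i a - β * (r i a - Jmu') ^ 2)) →
          Jms' - Jdms ≤ β * (Jmu' - Jdmu) ^ 2 := by
  intro θ' hθ0 hθ1 πθ' hπ0 hπ1 hstat Jmu' Jms' hJmu' hJms'
  simp only [ite_mul, one_mul, zero_mul, Finset.sum_ite_eq', Finset.mem_univ,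
    if_true] at hg
  -- stationarity gives a zero telescoping term
  have hzero : ∑ i, πθ' i * ((∑ j, (∑ a, θ' i a * p a i j) * g j) - g i) = 0 := by
    have h1 : (∑ i, πθ' i * ∑ j, (∑ a, θ' i a * p a i j) * g j)
        = ∑ j, πθ' j * g j := by
      simp_rw [Finset.mul_sum]
      rw [Finset.sum_comm]
      refine Finset.sum_congr rfl fun j _ => ?_
      simp_rw [← mul_assoc]
      rw [← Finset.sum_mul, hstat j]
    simp_rw [mul_sub, Finset.sum_sub_distrib, h1, sub_self]
  -- pointwise bound from the stopping condition
  have hBound : ∀ i, (∑ a, θ' i a * (r i a - β * (r i a - Jmu') ^ 2))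
      + ((∑ j, (∑ a, θ' i a * p a i j) * g j) - g i) - Jdms
      ≤ 2 * β * (Jmu' - Jdmu) * (∑ a, θ' i a * r i a)
        + β * Jdmu ^ 2 - β * Jmu' ^ 2 := by
    intro i
    set B : A → ℝ := fun a =>
      (∑ j, p a i j * g j) + r i a - β * (r i a) ^ 2 + 2 * β * Jdmu * r i a
      with hBdef
    have hB : ∑ a, θ' i a * B a ≤ B (d i) := by
      calc ∑ a, θ' i a * B a ≤ ∑ a, θ' i a * B (d i) :=
            Finset.sum_le_sum fun a _ =>
              mul_le_mul_of_nonneg_left (hstop i a) (hθ0 i a)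
        _ = B (d i) := by rw [← Finset.sum_mul, hθ1 i, one_mul]
    have hswap : (∑ j, (∑ a, θ' i a * p a i j) * g j)
        = ∑ a, θ' i a * ∑ j, p a i j * g j := by
      simp_rw [Finset.sum_mul, Finset.mul_sum, mul_assoc]
      rw [Finset.sum_comm]
    have e1 : (∑ a, θ' i a * (r i a - β * (r i a - Jmu') ^ 2))
        + (∑ a, θ' i a * ∑ j, p a i j * g j)
        = ∑ a, θ' i a * (B a + 2 * β * (Jmu' - Jdmu) * r i a - β * Jmu' ^ 2) := by
      rw [← Finset.sum_add_distrib]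
      exact Finset.sum_congr rfl fun a _ => by simp only [hBdef]; ring
    have e2 : ∑ a, θ' i a * (B a + 2 * β * (Jmu' - Jdmu) * r i a - β * Jmu' ^ 2)
        = (∑ a, θ' i a * B a)
          + 2 * β * (Jmu' - Jdmu) * (∑ a, θ' i a * r i a) - β * Jmu' ^ 2 := by
      simp_rw [mul_sub, mul_add, Finset.sum_sub_distrib, Finset.sum_add_distrib,
        mul_left_comm (θ' i _), ← Finset.mul_sum, ← Finset.sum_mul, hθ1 i, one_mul]
    have hFd : (r i (d i) - β * (r i (d i) - Jdmu) ^ 2)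
        + (∑ j, p (d i) i j * g j) = B (d i) - β * Jdmu ^ 2 := by
      simp only [hBdef]; ring
    rw [hg i, hswap]
    nlinarith [hB]
  -- assemble
  have expand : (∑ i, πθ' i * ((∑ a, θ' i a * (r i a - β * (r i a - Jmu') ^ 2))
        + ((∑ j, (∑ a, θ' i a * p a i j) * g j) - g i) - Jdms))
      = Jms' - Jdms := by
    have split : (∑ i, πθ' i * ((∑ a, θ' i a * (r i a - β * (r i a - Jmu') ^ 2))
          + ((∑ j, (∑ a, θ' i a * p a i j) * g j) - g i) - Jdms))
        = (∑ i, πθ' i * (∑ a, θ' i a * (r i a - β * (r i a - Jmu') ^ 2)))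
          + (∑ i, πθ' i * ((∑ j, (∑ a, θ' i a * p a i j) * g j) - g i))
          - ∑ i, πθ' i * Jdms := by
      rw [← Finset.sum_add_distrib, ← Finset.sum_sub_distrib]
      exact Finset.sum_congr rfl fun i _ => by ring
    rw [split, hzero, ← Finset.sum_mul, hπ1, one_mul, ← hJms', add_zero]
  have main : Jms' - Jdms
      ≤ ∑ i, πθ' i * (2 * β * (Jmu' - Jdmu) * (∑ a, θ' i a * r i a)
        + β * Jdmu ^ 2 - β * Jmu' ^ 2) := by
    rw [← expand]
    exact Finset.sum_le_sum fun i _ =>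
      mul_le_mul_of_nonneg_left (hBound i) (hπ0 i)
  have final : ∑ i, πθ' i * (2 * β * (Jmu' - Jdmu) * (∑ a, θ' i a * r i a)
      + β * Jdmu ^ 2 - β * Jmu' ^ 2) = β * (Jmu' - Jdmu) ^ 2 := by
    simp_rw [mul_sub, mul_add, Finset.sum_sub_distrib, Finset.sum_add_distrib,
      mul_left_comm (πθ' _), ← Finset.mul_sum, ← Finset.sum_mul, hπ1, one_mul,
      ← hJmu']
    ring
  linarith [main, final.le, final.ge]
end
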